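/- Let $p$ be prime, $g$ coprime to $p$ of multiplicative order $T$, and $a$ coprime to $p$. Suppose the additive energy bound $E_p(K) \le C K^{5/2}$ holds for all $1 \le K \le T$ (with an absolute constant $C$). Let $(\varphi_x)_{x=1}^{H}$ ($1 \le H < T$) be complex numbers with $|\varphi_x| \le \min(N, T/\langle x \rangle_T)$ for a positive integer $N \le T$. Then for any complex sequence $(\alpha_m)_{m=0}^{p-1}$, $\Big| \sum_{x=1}^{H} \sum_{m=0}^{p-1} \alpha_m \varphi_x e_p(a m g^x) \Big| \ll \|\mathcal{A}\|_1^{1/2} \|\mathcal{A}\|_2^{1/2} \, p^{1/4} N^{3/8} T^{5/8}$, where $\|\mathcal{A}\|_\sigma = (\sum_m |\alpha_m|^\sigma)^{1/\sigma}$ and $\langle x \rangle_T$ is the distance from $x$ to the nearest multiple of $T$. -/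

import Mathlib

open Finset

def addEnergy (p : ℕ) (g : ℤ) (K : ℕ) : ℕ :=
  ((Finset.Icc 1 K ×ˢ Finset.Icc 1 K ×ˢ Finset.Icc 1 K ×ˢ Finset.Icc 1 K).filter
    (fun q => (g : ZMod p) ^ q.1 + (g : ZMod p) ^ q.2.1
      = (g : ZMod p) ^ q.2.2.1 + (g : ZMod p) ^ q.2.2.2)).card

noncomputable def ep (p : ℕ) (z : ℤ) : ℂ := Complex.exp (2 * Real.pi * Complex.I * z / p)

/-- distance from `x` to the nearest multiple of `T` -/
def rdistN (x T : ℕ) : ℕ := min (x % T) (T - x % T)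

section auxLemmas

lemma ep_add (p : ℕ) (u v : ℤ) : ep p (u+v) = ep p u * ep p v := by
  unfold ep; rw [← Complex.exp_add]; congr 1; push_cast; ring

lemma ep_conj (p : ℕ) (u : ℤ) : (starRingEnd ℂ) (ep p u) = ep p (-u) := by
  unfold ep
  rw [← Complex.exp_conj]; congr 1
  simp only [map_div₀, map_mul, map_ofNat, Complex.conj_I, Complex.conj_ofReal, map_natCast,
    map_intCast]
  push_cast; ring

lemma ep_pow (p : ℕ) (u : ℤ) (m : ℕ) : ep p u ^ m = ep p (u * m) := by
  unfold ep; rw [← Complex.exp_nat_mul]; congr 1; push_cast; ring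

lemma ep_sum (p : ℕ) (hp : p.Prime) (u : ℤ) :
    ∑ m ∈ range p, ep p (u * m) = if (p:ℤ) ∣ u then (p:ℂ) else 0 := by
  have hp0 : (p:ℂ) ≠ 0 := by exact_mod_cast hp.ne_zero
  have h1 : ∀ m ∈ range p, ep p (u * m) = ep p u ^ m := fun m _ => (ep_pow p u m).symm
  rw [Finset.sum_congr rfl h1]
  by_cases hd : (p:ℤ) ∣ u
  · obtain ⟨k, hk⟩ := hd
    have h2 : ep p u = 1 := by
      unfold ep
      rw [hk]
      have h3 : 2 * (Real.pi:ℂ) * Complex.I * ((p:ℤ) * k : ℤ) / p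
          = (k:ℤ) * (2 * Real.pi * Complex.I) := by
        push_cast; field_simp
      rw [h3, Complex.exp_int_mul_two_pi_mul_I]
    simp only [h2, one_pow, Finset.sum_const, Finset.card_range, nsmul_eq_mul, mul_one]
    rw [if_pos ⟨k, hk⟩]
  · have hzp : ep p u ^ p = 1 := by
      rw [ep_pow]
      unfold ep
      have h3 : 2 * (Real.pi:ℂ) * Complex.I * (u * p : ℤ) / p
          = (u:ℤ) * (2 * Real.pi * Complex.I) := by
        push_cast; field_simp
      rw [h3, Complex.exp_int_mul_two_pi_mul_I]
    have hz1 : ep p u ≠ 1 := by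
      intro h
      unfold ep at h
      rw [Complex.exp_eq_one_iff] at h
      obtain ⟨n, hn⟩ := h
      apply hd
      refine ⟨n, ?_⟩
      have h2 : (u:ℂ) = p * n := by
        have h2πI : (2*(Real.pi:ℂ)*Complex.I) ≠ 0 := by
          simp [Complex.I_ne_zero, Complex.ofReal_ne_zero, Real.pi_ne_zero]
        have h4 : (2*(Real.pi:ℂ)*Complex.I) * u = (2*(Real.pi:ℂ)*Complex.I) * (p * n) := by
          field_simp at hn
          linear_combination (2*(Real.pi:ℂ)*Complex.I) * hn
        exact mul_left_cancel₀ h2πI h4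
      exact_mod_cast h2
    rw [geom_sum_eq hz1, hzp]
    simp [hd]

lemma holder124 (s : Finset ℕ) (f v : ℕ → ℝ) (hf : ∀ i ∈ s, 0 ≤ f i) (hv : ∀ i ∈ s, 0 ≤ v i) :
    ∑ i ∈ s, f i * v i ≤
      (∑ i ∈ s, f i) ^ ((1:ℝ)/2) * (∑ i ∈ s, f i ^ 2) ^ ((1:ℝ)/4)
        * (∑ i ∈ s, v i ^ 4) ^ ((1:ℝ)/4) := by
  set A1 := ∑ i ∈ s, f i with hA1
  set A2 := ∑ i ∈ s, f i ^ 2 with hA2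
  set M := ∑ i ∈ s, v i ^ 4 with hM
  have hA1n : 0 ≤ A1 := Finset.sum_nonneg hf
  have hA2n : 0 ≤ A2 := Finset.sum_nonneg fun i _ => sq_nonneg _
  have hMn : 0 ≤ M := Finset.sum_nonneg fun i _ => by positivity
  have hSn : 0 ≤ ∑ i ∈ s, f i * v i :=
    Finset.sum_nonneg fun i hi => mul_nonneg (hf i hi) (hv i hi)
  have c1 : (∑ i ∈ s, f i * v i) ^ 2 ≤ A1 * ∑ i ∈ s, f i * v i ^ 2 := by
    have := Finset.sum_mul_sq_le_sq_mul_sq s (fun i => Real.sqrt (f i))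
      (fun i => Real.sqrt (f i) * v i)
    calc (∑ i ∈ s, f i * v i) ^ 2
        = (∑ i ∈ s, Real.sqrt (f i) * (Real.sqrt (f i) * v i)) ^ 2 := by
          congr 1; apply Finset.sum_congr rfl; intro i hi
          rw [← mul_assoc, Real.mul_self_sqrt (hf i hi)]
      _ ≤ (∑ i ∈ s, Real.sqrt (f i) ^ 2) * ∑ i ∈ s, (Real.sqrt (f i) * v i) ^ 2 := this
      _ = A1 * ∑ i ∈ s, f i * v i ^ 2 := by
          congr 1
          · apply Finset.sum_congr rfl; intro i hi; exact Real.sq_sqrt (hf i hi)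
          · apply Finset.sum_congr rfl; intro i hi
            rw [mul_pow, Real.sq_sqrt (hf i hi)]
  have c2 : (∑ i ∈ s, f i * v i ^ 2) ^ 2 ≤ A2 * M := by
    have := Finset.sum_mul_sq_le_sq_mul_sq s f (fun i => v i ^ 2)
    calc (∑ i ∈ s, f i * v i ^ 2) ^ 2 ≤ (∑ i ∈ s, f i ^ 2) * ∑ i ∈ s, (v i ^ 2) ^ 2 := this
      _ = A2 * M := by congr 1; apply Finset.sum_congr rfl; intro i _; ring
  have c4 : (∑ i ∈ s, f i * v i) ^ 4 ≤ A1 ^ 2 * (A2 * M) := by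
    have h1 : (∑ i ∈ s, f i * v i) ^ 4 = ((∑ i ∈ s, f i * v i) ^ 2) ^ 2 := by ring
    rw [h1]
    calc ((∑ i ∈ s, f i * v i) ^ 2) ^ 2 ≤ (A1 * ∑ i ∈ s, f i * v i ^ 2) ^ 2 := by
          apply pow_le_pow_left₀ (sq_nonneg _) c1
      _ = A1 ^ 2 * (∑ i ∈ s, f i * v i ^ 2) ^ 2 := by ring
      _ ≤ A1 ^ 2 * (A2 * M) := by
          apply mul_le_mul_of_nonneg_left c2 (sq_nonneg _)
  have key : ∑ i ∈ s, f i * v i ≤ (A1 ^ 2 * (A2 * M)) ^ ((1:ℝ)/4) := by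
    have h5 : ∑ i ∈ s, f i * v i = ((∑ i ∈ s, f i * v i) ^ (4:ℕ)) ^ ((1:ℝ)/4) := by
      rw [← Real.rpow_natCast (∑ i ∈ s, f i * v i) 4, ← Real.rpow_mul hSn]
      norm_num
    rw [h5]
    apply Real.rpow_le_rpow (by positivity) c4 (by norm_num)
  calc ∑ i ∈ s, f i * v i ≤ (A1 ^ 2 * (A2 * M)) ^ ((1:ℝ)/4) := key
    _ = A1 ^ ((1:ℝ)/2) * A2 ^ ((1:ℝ)/4) * M ^ ((1:ℝ)/4) := by
      rw [Real.mul_rpow (by positivity) (by positivity),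
        Real.mul_rpow hA2n hMn,
        ← Real.rpow_natCast A1 2, ← Real.rpow_mul hA1n]
      norm_num
      ring

lemma fourth_moment (p : ℕ) (hp : p.Prime) (a g : ℤ) (ha : ¬ (p:ℤ) ∣ a)
    (L : Finset ℕ) (ψ : ℕ → ℂ) (B : ℝ) (hB : 0 ≤ B) (hψ : ∀ x ∈ L, ‖ψ x‖ ≤ B) :
    ∑ m ∈ range p, ‖∑ x ∈ L, ψ x * ep p (a*m*g^x)‖^4 ≤
      (p : ℝ) * B^4 * ((((L ×ˢ L) ×ˢ (L ×ˢ L)).filter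
        (fun q => (g : ZMod p) ^ q.1.1 + (g : ZMod p) ^ q.1.2
          = (g : ZMod p) ^ q.2.1 + (g : ZMod p) ^ q.2.2)).card : ℝ) := by
  set V : ℕ → ℂ := fun m => ∑ x ∈ L, ψ x * ep p (a*m*g^x) with hV
  set cc : (ℕ×ℕ)×(ℕ×ℕ) → ℂ := fun q =>
    ψ q.1.1 * ψ q.1.2 * (starRingEnd ℂ) (ψ q.2.1) * (starRingEnd ℂ) (ψ q.2.2) with hcc
  set sfn : (ℕ×ℕ)×(ℕ×ℕ) → ℤ := fun q => g^q.1.1 + g^q.1.2 - g^q.2.1 - g^q.2.2 with hsfn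
  set P := (L ×ˢ L) ×ˢ (L ×ˢ L) with hP
  have e1 : ∀ m : ℕ, ((‖V m‖^4 : ℝ) : ℂ) = ∑ q ∈ P, cc q * ep p (a * m * sfn q) := by
    intro m
    have habs : ((‖V m‖^4 : ℝ) : ℂ) = (V m)^2 * ((starRingEnd ℂ) (V m))^2 := by
      have h1 : V m * (starRingEnd ℂ) (V m) = ((‖V m‖^2 : ℝ) : ℂ) := by
        rw [Complex.mul_conj]
        norm_cast
        rw [Complex.normSq_eq_norm_sq]
      have : ((‖V m‖^4 : ℝ) : ℂ) = ((‖V m‖^2 : ℝ) : ℂ)^2 := by push_cast; ring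
      rw [this, ← h1]; ring
    rw [habs]
    have hz2 : (V m)^2 = ∑ q ∈ L ×ˢ L, (ψ q.1 * ψ q.2) * ep p (a*m*(g^q.1 + g^q.2)) := by
      rw [sq, hV, Finset.sum_mul_sum]
      rw [← Finset.sum_product']
      apply Finset.sum_congr rfl
      intro q _
      rw [show a*(m:ℤ)*(g^q.1 + g^q.2) = (a*m*g^q.1) + (a*m*g^q.2) by ring, ep_add]
      ring
    have hw2 : ((starRingEnd ℂ) (V m))^2
        = ∑ q ∈ L ×ˢ L, ((starRingEnd ℂ) (ψ q.1) * (starRingEnd ℂ) (ψ q.2))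
            * ep p (a*m*(-(g^q.1) - g^q.2)) := by
      rw [sq, hV, map_sum]
      have hconj : ∀ x, (starRingEnd ℂ) (ψ x * ep p (a*m*g^x))
          = (starRingEnd ℂ) (ψ x) * ep p (-(a*m*g^x)) := by
        intro x; rw [map_mul, ep_conj]
      simp_rw [hconj]
      rw [Finset.sum_mul_sum, ← Finset.sum_product']
      apply Finset.sum_congr rfl
      intro q _
      rw [show a*(m:ℤ)*(-(g^q.1) - g^q.2) = (-(a*m*g^q.1)) + (-(a*m*g^q.2)) by ring, ep_add]
      ring
    rw [hz2, hw2, Finset.sum_mul_sum, ← Finset.sum_product']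
    apply Finset.sum_congr rfl
    intro q _
    rw [show a*(m:ℤ)*sfn q = (a*m*(g^q.1.1 + g^q.1.2)) + (a*m*(-(g^q.2.1) - g^q.2.2)) by
      simp only [hsfn]; ring, ep_add]
    simp only [hcc]; ring
  have e2 : ((∑ m ∈ range p, ‖V m‖^4 : ℝ) : ℂ)
      = (p:ℝ) * ∑ q ∈ P.filter (fun q => (p:ℤ) ∣ sfn q), cc q := by
    rw [Complex.ofReal_sum]
    rw [Finset.sum_congr rfl (fun m _ => e1 m), Finset.sum_comm]
    rw [Finset.mul_sum, Finset.sum_filter]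
    apply Finset.sum_congr rfl
    intro q _
    rw [← Finset.mul_sum]
    have hre : ∀ m ∈ range p, ep p (a * m * sfn q) = ep p ((a * sfn q) * m) := by
      intro m _; congr 1; ring
    rw [Finset.sum_congr rfl hre, ep_sum p hp]
    by_cases hdq : (p:ℤ) ∣ sfn q
    · rw [if_pos (Dvd.dvd.mul_left hdq a), if_pos hdq]
      push_cast; ring
    · rw [if_neg, if_neg hdq, mul_zero]
      intro hdvd
      rcases (Int.Prime.dvd_mul' (by exact_mod_cast hp) hdvd) with h | h
      · exact ha h
      · exact hdq h
  have e3 : P.filter (fun q => (p:ℤ) ∣ sfn q) = P.filter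
      (fun q => (g : ZMod p) ^ q.1.1 + (g : ZMod p) ^ q.1.2
        = (g : ZMod p) ^ q.2.1 + (g : ZMod p) ^ q.2.2) := by
    apply Finset.filter_congr
    intro q _
    rw [← ZMod.intCast_zmod_eq_zero_iff_dvd, hsfn]
    push_cast
    constructor
    · intro h; linear_combination (h : ((g:ZMod p)^q.1.1 + g^q.1.2 - g^q.2.1 - g^q.2.2 : ZMod p) = 0)
    · intro h; linear_combination h
  have e4 : ∑ m ∈ range p, ‖V m‖^4 = ‖((∑ m ∈ range p, ‖V m‖^4 : ℝ) : ℂ)‖ := by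
    rw [Complex.norm_real, Real.norm_of_nonneg]
    positivity
  rw [e4, e2, e3]
  rw [norm_mul]
  have hnp : ‖((p:ℝ):ℂ)‖ = (p:ℝ) := by
    rw [Complex.norm_real, Real.norm_of_nonneg (by positivity)]
  rw [hnp]
  rw [mul_assoc]
  apply mul_le_mul_of_nonneg_left _ (by positivity)
  calc ‖∑ q ∈ P.filter _, cc q‖ ≤ ∑ q ∈ P.filter (fun q => (g : ZMod p) ^ q.1.1 + (g : ZMod p) ^ q.1.2
        = (g : ZMod p) ^ q.2.1 + (g : ZMod p) ^ q.2.2), ‖cc q‖ := norm_sum_le _ _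
    _ ≤ ∑ q ∈ P.filter (fun q => (g : ZMod p) ^ q.1.1 + (g : ZMod p) ^ q.1.2
        = (g : ZMod p) ^ q.2.1 + (g : ZMod p) ^ q.2.2), B^4 := by
      apply Finset.sum_le_sum
      intro q hq
      rw [Finset.mem_filter, hP, Finset.mem_product] at hq
      obtain ⟨⟨hq1, hq2⟩, _⟩ := hq
      rw [Finset.mem_product] at hq1 hq2
      rw [hcc]
      calc ‖ψ q.1.1 * ψ q.1.2 * (starRingEnd ℂ) (ψ q.2.1) * (starRingEnd ℂ) (ψ q.2.2)‖
          = ‖ψ q.1.1‖ * ‖ψ q.1.2‖ * ‖ψ q.2.1‖ * ‖ψ q.2.2‖ := by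
            simp only [norm_mul, RCLike.norm_conj]
        _ ≤ B * B * B * B := by
            gcongr <;> [exact hψ _ hq1.1; exact hψ _ hq1.2; exact hψ _ hq2.1; exact hψ _ hq2.2]
        _ = B^4 := by ring
    _ = (((P.filter (fun q => (g : ZMod p) ^ q.1.1 + (g : ZMod p) ^ q.1.2
        = (g : ZMod p) ^ q.2.1 + (g : ZMod p) ^ q.2.2)).card : ℝ)) * B^4 := by
      rw [Finset.sum_const, nsmul_eq_mul]
    _ = B^4 * ((P.filter _).card : ℝ) := by ring

lemma quad_count_le (p : ℕ) (hp : p.Prime) (g : ℤ) (hg : (g : ZMod p) ≠ 0)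
    (L : Finset ℕ) (c K : ℕ) (hL : L ⊆ Icc (c+1) (c+K)) :
    (((L ×ˢ L) ×ˢ (L ×ˢ L)).filter
      (fun q => (g : ZMod p) ^ q.1.1 + (g : ZMod p) ^ q.1.2
        = (g : ZMod p) ^ q.2.1 + (g : ZMod p) ^ q.2.2)).card ≤ addEnergy p g K := by
  haveI := Fact.mk hp
  set J := Icc (c+1) (c+K) with hJ
  have hsub : (((L ×ˢ L) ×ˢ (L ×ˢ L)).filter
      (fun q => (g : ZMod p) ^ q.1.1 + (g : ZMod p) ^ q.1.2
        = (g : ZMod p) ^ q.2.1 + (g : ZMod p) ^ q.2.2)) ⊆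
      (((J ×ˢ J) ×ˢ (J ×ˢ J)).filter
      (fun q => (g : ZMod p) ^ q.1.1 + (g : ZMod p) ^ q.1.2
        = (g : ZMod p) ^ q.2.1 + (g : ZMod p) ^ q.2.2)) := by
    apply Finset.filter_subset_filter
    exact Finset.product_subset_product (Finset.product_subset_product hL hL)
      (Finset.product_subset_product hL hL)
  apply le_trans (Finset.card_le_card hsub)
  apply le_of_eq
  unfold _root_.addEnergy
  apply Finset.card_bij (fun q _ => (q.1.1 - c, q.1.2 - c, q.2.1 - c, q.2.2 - c))
  · rintro ⟨⟨x1, x2⟩, x3, x4⟩ hq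
    rw [Finset.mem_filter] at hq ⊢
    obtain ⟨hmem, hcond⟩ := hq
    rw [Finset.mem_product, Finset.mem_product, Finset.mem_product] at hmem
    obtain ⟨⟨h1, h2⟩, h3, h4⟩ := hmem
    rw [hJ, Finset.mem_Icc] at h1 h2 h3 h4
    simp only at h1 h2 h3 h4 hcond
    constructor
    · show (x1 - c, x2 - c, x3 - c, x4 - c) ∈ _
      simp only [Finset.mem_product, Finset.mem_Icc]
      refine ⟨⟨?_, ?_⟩, ⟨?_, ?_⟩, ⟨?_, ?_⟩, ?_, ?_⟩ <;> omega
    · show (g : ZMod p) ^ (x1 - c) + (g : ZMod p) ^ (x2 - c)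
          = (g : ZMod p) ^ (x3 - c) + (g : ZMod p) ^ (x4 - c)
      have hgc : (g : ZMod p) ^ c ≠ 0 := pow_ne_zero _ hg
      apply mul_left_cancel₀ hgc
      have hx : ∀ x : ℕ, c + 1 ≤ x → (g : ZMod p) ^ c * (g : ZMod p) ^ (x - c) = (g:ZMod p) ^ x := by
        intro x hx
        rw [← pow_add]
        congr 1
        omega
      calc (g:ZMod p)^c * ((g:ZMod p)^(x1-c) + (g:ZMod p)^(x2-c))
          = (g:ZMod p)^x1 + (g:ZMod p)^x2 := by rw [mul_add, hx x1 h1.1, hx x2 h2.1]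
        _ = (g:ZMod p)^x3 + (g:ZMod p)^x4 := hcond
        _ = (g:ZMod p)^c * ((g:ZMod p)^(x3-c) + (g:ZMod p)^(x4-c)) := by
            rw [mul_add, hx x3 h3.1, hx x4 h4.1]
  · rintro ⟨⟨x1, x2⟩, x3, x4⟩ hq ⟨⟨y1, y2⟩, y3, y4⟩ hq' heq
    rw [Finset.mem_filter] at hq hq'
    have hmem := hq.1
    have hmem' := hq'.1
    rw [Finset.mem_product, Finset.mem_product, Finset.mem_product] at hmem hmem'
    simp only [hJ, Finset.mem_Icc] at hmem hmem'
    simp only [Prod.mk.injEq] at heq ⊢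
    obtain ⟨e1, e2, e3, e4⟩ := heq
    refine ⟨⟨?_, ?_⟩, ?_, ?_⟩ <;> omega
  · rintro ⟨y1, y2, y3, y4⟩ hy
    rw [Finset.mem_filter] at hy
    obtain ⟨hmem, hcond⟩ := hy
    simp only [Finset.mem_product, Finset.mem_Icc] at hmem
    obtain ⟨h1, h2, h3, h4⟩ := hmem
    refine ⟨((y1 + c, y2 + c), (y3 + c, y4 + c)), ?_, ?_⟩
    · rw [Finset.mem_filter]
      constructor
      · simp only [Finset.mem_product, hJ, Finset.mem_Icc]
        refine ⟨⟨⟨?_, ?_⟩, ?_, ?_⟩, ⟨?_, ?_⟩, ?_, ?_⟩ <;> omega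
      · simp only []
        have hx : ∀ y : ℕ, (g : ZMod p) ^ (y + c) = (g:ZMod p) ^ c * (g : ZMod p) ^ y := by
          intro y; rw [← pow_add]; congr 1; omega
        rw [hx y1, hx y2, hx y3, hx y4, ← mul_add, ← mul_add, hcond]
    · simp only [Prod.mk.injEq]
      refine ⟨?_, ?_, ?_, ?_⟩ <;> omega

lemma rpow_block (n t : ℝ) (hn : 0 < n) (ht : 0 < t) (i : ℕ) :
    (n / 2^i) * ((2:ℝ)^(i+1) * t / n)^((5:ℝ)/8)
      ≤ 2 * ((2:ℝ)^(-((3:ℝ)/8)))^i * n^((3:ℝ)/8) * t^((5:ℝ)/8) := by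
  have h2 : (0:ℝ) < 2 := two_pos
  have e0 : ((2:ℝ)^(i+1) : ℝ) = (2:ℝ)^((i:ℝ)+1) := by
    rw [← Real.rpow_natCast (2:ℝ) (i+1)]
    push_cast; ring_nf
  have e1 : ((2:ℝ)^(i+1) * t / n)^((5:ℝ)/8)
      = (2:ℝ)^(((i:ℝ)+1)*((5:ℝ)/8)) * t^((5:ℝ)/8) / n^((5:ℝ)/8) := by
    rw [e0, Real.div_rpow (by positivity) hn.le, Real.mul_rpow (by positivity) ht.le,
      ← Real.rpow_mul h2.le]
  have hni : n / n^((5:ℝ)/8) = n^((3:ℝ)/8) := by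
    rw [div_eq_iff (by positivity), ← Real.rpow_add hn]
    norm_num
  have h2i : (2:ℝ)^(((i:ℝ)+1)*((5:ℝ)/8)) / (2:ℝ)^(i:ℕ) = (2:ℝ)^((5:ℝ)/8 - 3*(i:ℝ)/8) := by
    rw [← Real.rpow_natCast (2:ℝ) i, ← Real.rpow_sub h2]
    congr 1; ring
  have e2 : (n / 2^i) * ((2:ℝ)^(((i:ℝ)+1)*((5:ℝ)/8)) * t^((5:ℝ)/8) / n^((5:ℝ)/8))
      = ((2:ℝ)^(((i:ℝ)+1)*((5:ℝ)/8)) / (2:ℝ)^(i:ℕ)) * (n / n^((5:ℝ)/8)) * t^((5:ℝ)/8) := by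
    ring
  rw [e1, e2, hni, h2i]
  have e3 : 2 * ((2:ℝ)^(-((3:ℝ)/8)))^i = (2:ℝ)^(1 - 3*(i:ℝ)/8) := by
    rw [← Real.rpow_natCast ((2:ℝ)^(-((3:ℝ)/8))) i, ← Real.rpow_mul h2.le]
    rw [show (1 - 3*(i:ℝ)/8) = 1 + (-((3:ℝ)/8) * (i:ℕ)) by push_cast; ring,
      Real.rpow_add h2, Real.rpow_one]
  rw [e3]
  have h4 : (2:ℝ)^((5:ℝ)/8 - 3*(i:ℝ)/8) ≤ (2:ℝ)^(1 - 3*(i:ℝ)/8) :=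
    Real.rpow_le_rpow_of_exponent_le (by norm_num) (by linarith)
  exact mul_le_mul_of_nonneg_right (mul_le_mul_of_nonneg_right h4
    (Real.rpow_nonneg hn.le _)) (Real.rpow_nonneg ht.le _)

lemma geo_bound (N : ℕ) : ∑ i ∈ range (N+1), ((2:ℝ)^(-((3:ℝ)/8)))^i ≤ 5 := by
  set r : ℝ := (2:ℝ)^(-((3:ℝ)/8)) with hr
  have hr0 : 0 ≤ r := Real.rpow_nonneg (by norm_num) _
  have hr45 : r ≤ 4/5 := by
    have h8 : r ^ (8:ℕ) = 1/8 := by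
      rw [hr, ← Real.rpow_natCast ((2:ℝ)^(-((3:ℝ)/8))) 8, ← Real.rpow_mul (by norm_num)]
      rw [show (-((3:ℝ)/8)) * ((8:ℕ):ℝ) = ((-3:ℤ):ℝ) by push_cast; ring, Real.rpow_intCast]
      norm_num
    apply le_of_pow_le_pow_left₀ (n := 8) (by norm_num) (by norm_num)
    rw [h8]; norm_num
  have hr1 : r < 1 := lt_of_le_of_lt hr45 (by norm_num)
  calc ∑ i ∈ range (N+1), r^i = (1 - r^(N+1))/(1 - r) := by
        rw [geom_sum_eq (ne_of_lt hr1)]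
        rw [div_eq_div_iff (by linarith) (by linarith)]
        ring
    _ ≤ 1 / (1 - r) := by
        rw [div_le_div_iff₀ (by linarith) (by linarith)]
        have : 0 ≤ r^(N+1) := pow_nonneg hr0 _
        nlinarith
    _ ≤ 5 := by
        rw [div_le_iff₀ (by linarith)]
        linarith

end auxLemmas

theorem stmt7 (C : ℝ) :
    ∃ C' : ℝ, 0 < C' ∧
      ∀ (p T H N : ℕ) (g a : ℤ) (φ α : ℕ → ℂ),
        p.Prime → Int.gcd g p = 1 → Int.gcd a p = 1 →
        T = orderOf ((g : ZMod p)) →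
        (∀ K : ℕ, 1 ≤ K → K ≤ T → (addEnergy p g K : ℝ) ≤ C * (K : ℝ) ^ ((5 : ℝ) / 2)) →
        1 ≤ H → H < T → 1 ≤ N → N ≤ T →
        (∀ x : ℕ, 1 ≤ x → x ≤ H → ‖φ x‖ ≤ min (N : ℝ) ((T : ℝ) / (rdistN x T : ℝ))) →
        ‖∑ x ∈ Finset.Icc 1 H, ∑ m ∈ Finset.range p, α m * φ x * ep p (a * m * g ^ x)‖ ≤
          C' * (∑ m ∈ Finset.range p, ‖α m‖) ^ ((1 : ℝ) / 2) *
            (∑ m ∈ Finset.range p, ‖α m‖ ^ 2) ^ ((1 : ℝ) / 4) *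
              (p : ℝ) ^ ((1 : ℝ) / 4) * (N : ℝ) ^ ((3 : ℝ) / 8) * (T : ℝ) ^ ((5 : ℝ) / 8) := by
  refine ⟨20 * (1 + |C|), by positivity, ?_⟩
  intro p T H N g a φ α hp hg ha hT hE hH1 hHT hN1 hNT hφ
  haveI := Fact.mk hp
  have hT2 : 2 ≤ T := by omega
  have hp0 : 0 < p := hp.pos
  have hN0 : 0 < N := hN1
  have hgz : (g : ZMod p) ≠ 0 := by
    intro h
    rw [ZMod.intCast_zmod_eq_zero_iff_dvd] at h
    have h1 : p ∣ g.natAbs := by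
      have := Int.natAbs_dvd_natAbs.mpr h
      simpa using this
    have h2 : p ∣ Int.gcd g p := Nat.dvd_gcd h1 dvd_rfl
    rw [hg] at h2
    have := Nat.le_of_dvd one_pos h2
    have := hp.two_le
    omega
  have hpa : ¬ (p:ℤ) ∣ a := by
    intro h
    have h1 : p ∣ a.natAbs := by
      have := Int.natAbs_dvd_natAbs.mpr h
      simpa using this
    have h2 : p ∣ Int.gcd a p := Nat.dvd_gcd h1 dvd_rfl
    rw [ha] at h2
    have := Nat.le_of_dvd one_pos h2
    have := hp.two_le
    omega
  have hC1 : (1:ℝ) ≤ C := by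
    have h1 := hE 1 le_rfl (by omega)
    have h2 : (1:ℕ) ≤ addEnergy p g 1 := by
      apply Finset.card_pos.mpr
      refine ⟨(1, 1, 1, 1), ?_⟩
      rw [Finset.mem_filter]
      constructor
      · simp [Finset.mem_product]
      · rfl
    have h3 : (1:ℝ) ≤ (addEnergy p g 1 : ℝ) := by exact_mod_cast h2
    have h4 : ((1:ℕ):ℝ) ^ ((5:ℝ)/2) = 1 := by norm_num
    rw [h4] at h1
    linarith
  have hC0 : (0:ℝ) < C := lt_of_lt_of_le one_pos hC1
  set A1 := ∑ m ∈ range p, ‖α m‖ with hA1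
  set A2 := ∑ m ∈ range p, ‖α m‖^2 with hA2
  have hA1n : 0 ≤ A1 := Finset.sum_nonneg fun _ _ => norm_nonneg _
  have hA2n : 0 ≤ A2 := Finset.sum_nonneg fun _ _ => by positivity
  set G : ℝ := A1^((1:ℝ)/2) * A2^((1:ℝ)/4) * (p:ℝ)^((1:ℝ)/4) * (N:ℝ)^((3:ℝ)/8)
    * (T:ℝ)^((5:ℝ)/8) with hG
  have hGn : 0 ≤ G := by positivity
  set r : ℝ := (2:ℝ)^(-((3:ℝ)/8)) with hrdef
  have hrn : 0 ≤ r := Real.rpow_nonneg (by norm_num) _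
  -- the block estimate
  have block : ∀ (L : Finset ℕ) (c K : ℕ) (B : ℝ), 0 ≤ B → L ⊆ Icc (c+1) (c+K) →
      1 ≤ K → K ≤ T → (∀ x ∈ L, ‖φ x‖ ≤ B) →
      ‖∑ x ∈ L, ∑ m ∈ range p, α m * φ x * ep p (a * m * g ^ x)‖ ≤
        A1^((1:ℝ)/2) * A2^((1:ℝ)/4) * ((p:ℝ) * B^4 * (C * (K:ℝ)^((5:ℝ)/2)))^((1:ℝ)/4) := by
    intro L c K B hB hL hK1 hKT hφB
    rw [Finset.sum_comm]
    have hswap : ∀ m ∈ range p, ∑ x ∈ L, α m * φ x * ep p (a * m * g ^ x)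
        = α m * ∑ x ∈ L, φ x * ep p (a * m * g ^ x) := by
      intro m _
      rw [Finset.mul_sum]
      exact Finset.sum_congr rfl fun x _ => by ring
    rw [Finset.sum_congr rfl hswap]
    have step1 : ‖∑ m ∈ range p, α m * ∑ x ∈ L, φ x * ep p (a * m * g ^ x)‖
        ≤ ∑ m ∈ range p, ‖α m‖ * ‖∑ x ∈ L, φ x * ep p (a * m * g ^ x)‖ := by
      refine le_trans (norm_sum_le _ _) ?_
      exact le_of_eq (Finset.sum_congr rfl fun m _ => norm_mul _ _)
    have step2 := holder124 (range p) (fun m => ‖α m‖)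
      (fun m => ‖∑ x ∈ L, φ x * ep p (a * m * g ^ x)‖)
      (fun m _ => norm_nonneg _) (fun m _ => norm_nonneg _)
    have step3 : ∑ m ∈ range p, ‖∑ x ∈ L, φ x * ep p (a * m * g ^ x)‖^4
        ≤ (p:ℝ) * B^4 * (C * (K:ℝ)^((5:ℝ)/2)) := by
      have h1 := quad_count_le p hp g hgz L c K hL
      have h2 := hE K hK1 hKT
      have h3 := fourth_moment p hp a g hpa L φ B hB hφB
      exact le_trans h3 (mul_le_mul_of_nonneg_left
        (le_trans (Nat.cast_le.mpr h1) h2) (by positivity))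
    calc ‖∑ m ∈ range p, α m * ∑ x ∈ L, φ x * ep p (a * m * g ^ x)‖
        ≤ ∑ m ∈ range p, ‖α m‖ * ‖∑ x ∈ L, φ x * ep p (a * m * g ^ x)‖ := step1
      _ ≤ A1^((1:ℝ)/2) * A2^((1:ℝ)/4)
          * (∑ m ∈ range p, ‖∑ x ∈ L, φ x * ep p (a * m * g ^ x)‖^4)^((1:ℝ)/4) := step2
      _ ≤ A1^((1:ℝ)/2) * A2^((1:ℝ)/4)
          * ((p:ℝ) * B^4 * (C * (K:ℝ)^((5:ℝ)/2)))^((1:ℝ)/4) := by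
          apply mul_le_mul_of_nonneg_left _ (by positivity)
          exact Real.rpow_le_rpow (by positivity) step3 (by norm_num)
  -- numeric estimate for a block
  have hCq : C^((1:ℝ)/4) ≤ C := by
    nth_rewrite 2 [← Real.rpow_one C]
    exact Real.rpow_le_rpow_of_exponent_le hC1 (by norm_num)
  have blocknum : ∀ (i K : ℕ), (K:ℝ) ≤ (2:ℝ)^(i+1) * T / N →
      ((p:ℝ) * ((N:ℝ)/2^i)^4 * (C * (K:ℝ)^((5:ℝ)/2)))^((1:ℝ)/4)
        ≤ 2 * C * r^i * ((p:ℝ)^((1:ℝ)/4) * (N:ℝ)^((3:ℝ)/8) * (T:ℝ)^((5:ℝ)/8)) := by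
    intro i K hK
    have hBpos : (0:ℝ) ≤ (N:ℝ)/2^i := by positivity
    have e1 : ((p:ℝ) * ((N:ℝ)/2^i)^4 * (C * (K:ℝ)^((5:ℝ)/2)))^((1:ℝ)/4)
        = (p:ℝ)^((1:ℝ)/4) * ((N:ℝ)/2^i) * (C^((1:ℝ)/4) * (K:ℝ)^((5:ℝ)/8)) := by
      rw [Real.mul_rpow (by positivity) (by positivity),
          Real.mul_rpow (by positivity) (by positivity),
          Real.mul_rpow (by positivity) (by positivity)]
      congr 1
      · congr 1
        rw [← Real.rpow_natCast ((N:ℝ)/2^i) 4, ← Real.rpow_mul hBpos]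
        norm_num
      · congr 1
        rw [← Real.rpow_mul (by positivity)]
        norm_num
    rw [e1]
    calc (p:ℝ)^((1:ℝ)/4) * ((N:ℝ)/2^i) * (C^((1:ℝ)/4) * (K:ℝ)^((5:ℝ)/8))
        ≤ (p:ℝ)^((1:ℝ)/4) * ((N:ℝ)/2^i)
          * (C * (((2:ℝ)^(i+1) * T / N))^((5:ℝ)/8)) := by
          apply mul_le_mul_of_nonneg_left _ (by positivity)
          apply mul_le_mul hCq (Real.rpow_le_rpow (by positivity) hK (by norm_num))
            (by positivity) (by linarith)
      _ = C * (((N:ℝ)/2^i) * (((2:ℝ)^(i+1) * T / N))^((5:ℝ)/8)) * (p:ℝ)^((1:ℝ)/4) := by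
          ring
      _ ≤ C * (2 * r^i * (N:ℝ)^((3:ℝ)/8) * (T:ℝ)^((5:ℝ)/8)) * (p:ℝ)^((1:ℝ)/4) := by
          apply mul_le_mul_of_nonneg_right _ (by positivity)
          apply mul_le_mul_of_nonneg_left _ (le_of_lt hC0)
          exact rpow_block (N:ℝ) (T:ℝ) (by exact_mod_cast hN0) (by positivity) i
      _ = 2 * C * r^i * ((p:ℝ)^((1:ℝ)/4) * (N:ℝ)^((3:ℝ)/8) * (T:ℝ)^((5:ℝ)/8)) := by
          ring
  -- index and block structure
  set idx : ℕ → ℕ := fun x => Nat.log 2 (max 1 (N * min x (T - x) / T)) with hidx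
  set D : ℕ → ℕ := fun i => 2^(i+1) * T / N with hD
  have hD1 : ∀ i, 1 ≤ D i := by
    intro i
    have h1 : N ≤ 2^(i+1) * T := by
      refine le_trans hNT ?_
      calc T = 1 * T := (one_mul T).symm
        _ ≤ 2^(i+1) * T := Nat.mul_le_mul_right T Nat.one_le_two_pow
    simp only [hD]
    exact (Nat.le_div_iff_mul_le hN0).mpr (by omega)
  have hDreal : ∀ i, (D i : ℝ) ≤ (2:ℝ)^(i+1) * T / N := by
    intro i
    simp only [hD]
    refine le_trans Nat.cast_div_le ?_
    push_cast
    exact le_rfl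
  have hF1 : ∀ x, 1 ≤ x → x ≤ H → ‖φ x‖ ≤ (N:ℝ) / 2^(idx x) := by
    intro x h1 h2
    have hxT : x < T := by omega
    have hb := hφ x h1 h2
    have hrd : rdistN x T = min x (T - x) := by
      simp [rdistN, Nat.mod_eq_of_lt hxT]
    rw [hrd] at hb
    have hdd1 : 1 ≤ min x (T - x) := by omega
    by_cases hq : N * min x (T - x) / T = 0
    · have hix : idx x = 0 := by
        simp only [hidx]
        rw [hq]
        norm_num
      rw [hix]
      simpa using le_trans hb (min_le_left _ _)
    · have hidxx : idx x = Nat.log 2 (N * min x (T - x) / T) := by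
        simp only [hidx]
        congr 1
        exact max_eq_right (Nat.one_le_iff_ne_zero.mpr hq)
      have hp1 : 2 ^ (idx x) ≤ N * min x (T - x) / T := by
        rw [hidxx]; exact Nat.pow_log_le_self 2 hq
      have hp2 : 2 ^ (idx x) * T ≤ N * min x (T - x) :=
        le_trans (Nat.mul_le_mul_right T hp1) (Nat.div_mul_le_self _ _)
      refine le_trans hb (le_trans (min_le_right _ _) ?_)
      have hddR : (0:ℝ) < ((min x (T - x) : ℕ) : ℝ) := by exact_mod_cast hdd1
      rw [div_le_div_iff₀ hddR (by positivity)]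
      calc (T:ℝ) * 2^(idx x) = ((2^(idx x) * T : ℕ) : ℝ) := by push_cast; ring
        _ ≤ ((N * min x (T - x) : ℕ) : ℝ) := Nat.cast_le.mpr hp2
        _ = (N:ℝ) * ((min x (T - x) : ℕ) : ℝ) := by push_cast; ring
  have hF2 : ∀ x, 1 ≤ x → x ≤ H → min x (T - x) ≤ D (idx x) := by
    intro x h1 h2
    have hlt : max 1 (N * min x (T - x) / T) < 2 ^ (idx x + 1) := by
      simp only [hidx]
      exact Nat.lt_pow_succ_log_self (by norm_num) _
    have h3 : N * min x (T - x) / T < 2 ^ (idx x + 1) :=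
      lt_of_le_of_lt (le_max_right 1 _) hlt
    have h4 : N * min x (T - x) < 2 ^ (idx x + 1) * T :=
      (Nat.div_lt_iff_lt_mul (by omega)).mp h3
    simp only [hD]
    refine (Nat.le_div_iff_mul_le hN0).mpr ?_
    calc min x (T - x) * N = N * min x (T - x) := Nat.mul_comm _ _
      _ ≤ 2 ^ (idx x + 1) * T := le_of_lt h4
  have hF3 : ∀ x, 1 ≤ x → x ≤ H → idx x ≤ N := by
    intro x h1 h2
    have hq : N * min x (T - x) / T ≤ N := by
      have hle : N * min x (T - x) ≤ N * T := Nat.mul_le_mul_left N (by omega)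
      calc N * min x (T - x) / T ≤ N * T / T := Nat.div_le_div_right hle
        _ = N := Nat.mul_div_cancel N (by omega)
    calc idx x = Nat.log 2 (max 1 (N * min x (T - x) / T)) := by simp only [hidx]
      _ ≤ Nat.log 2 N := Nat.log_mono_right (by omega)
      _ ≤ N := Nat.log_le_self 2 N
  -- splitting into fibers
  set f : ℕ → ℂ := fun x => ∑ m ∈ range p, α m * φ x * ep p (a * m * g ^ x) with hf
  set LA : ℕ → Finset ℕ := fun i => (Icc 1 H).filter (fun x => 2*x ≤ T ∧ idx x = i) with hLA
  set LB : ℕ → Finset ℕ := fun i => (Icc 1 H).filter (fun x => ¬ 2*x ≤ T ∧ idx x = i) with hLB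
  have hsplit : ∑ x ∈ Icc 1 H, f x
      = ∑ i ∈ range (N+1), ((∑ x ∈ LA i, f x) + (∑ x ∈ LB i, f x)) := by
    rw [Finset.sum_add_distrib]
    have hA : ∑ i ∈ range (N+1), ∑ x ∈ LA i, f x
        = ∑ x ∈ (Icc 1 H).filter (fun x => 2*x ≤ T), f x := by
      calc ∑ i ∈ range (N+1), ∑ x ∈ LA i, f x
          = ∑ i ∈ range (N+1),
              ∑ x ∈ ((Icc 1 H).filter (fun x => 2*x ≤ T)).filter (fun x => idx x = i), f x := by
            apply Finset.sum_congr rfl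
            intro i _
            congr 1
            simp only [hLA]
            rw [Finset.filter_filter]
        _ = ∑ x ∈ (Icc 1 H).filter (fun x => 2*x ≤ T), f x := by
            apply Finset.sum_fiberwise_of_maps_to
            intro x hx
            rw [Finset.mem_filter, Finset.mem_Icc] at hx
            rw [Finset.mem_range]
            have := hF3 x hx.1.1 hx.1.2
            omega
    have hB : ∑ i ∈ range (N+1), ∑ x ∈ LB i, f x
        = ∑ x ∈ (Icc 1 H).filter (fun x => ¬ 2*x ≤ T), f x := by
      calc ∑ i ∈ range (N+1), ∑ x ∈ LB i, f x
          = ∑ i ∈ range (N+1),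
              ∑ x ∈ ((Icc 1 H).filter (fun x => ¬ 2*x ≤ T)).filter (fun x => idx x = i), f x := by
            apply Finset.sum_congr rfl
            intro i _
            congr 1
            simp only [hLB]
            rw [Finset.filter_filter]
        _ = ∑ x ∈ (Icc 1 H).filter (fun x => ¬ 2*x ≤ T), f x := by
            apply Finset.sum_fiberwise_of_maps_to
            intro x hx
            rw [Finset.mem_filter, Finset.mem_Icc] at hx
            rw [Finset.mem_range]
            have := hF3 x hx.1.1 hx.1.2
            omega
    rw [hA, hB, Finset.sum_filter_add_sum_filter_not]
  -- the per-block bounds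
  have hblockA : ∀ i, ‖∑ x ∈ LA i, f x‖ ≤ A1^((1:ℝ)/2) * A2^((1:ℝ)/4)
      * (2 * C * r^i * ((p:ℝ)^((1:ℝ)/4) * (N:ℝ)^((3:ℝ)/8) * (T:ℝ)^((5:ℝ)/8))) := by
    intro i
    have hD1i := hD1 i
    have hsub : LA i ⊆ Icc (0+1) (0 + min H (D i)) := by
      intro x hx
      simp only [hLA, Finset.mem_filter, Finset.mem_Icc] at hx
      obtain ⟨⟨hx1, hx2⟩, hxa, hxi⟩ := hx
      have h2 := hF2 x hx1 hx2
      rw [hxi] at h2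
      rw [Finset.mem_Icc]
      omega
    have hK1 : 1 ≤ min H (D i) := by omega
    have hKT : min H (D i) ≤ T := by omega
    have hKreal : ((min H (D i) : ℕ):ℝ) ≤ (2:ℝ)^(i+1) * T / N := by
      refine le_trans (Nat.cast_le.mpr (min_le_right _ _)) (hDreal i)
    have hφB : ∀ x ∈ LA i, ‖φ x‖ ≤ (N:ℝ)/2^i := by
      intro x hx
      simp only [hLA, Finset.mem_filter, Finset.mem_Icc] at hx
      obtain ⟨⟨hx1, hx2⟩, _, hxi⟩ := hx
      have := hF1 x hx1 hx2
      rw [hxi] at this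
      exact this
    have hb := block (LA i) 0 (min H (D i)) ((N:ℝ)/2^i) (by positivity) hsub hK1 hKT hφB
    simp only [hf]
    refine le_trans hb ?_
    exact mul_le_mul_of_nonneg_left (blocknum i (min H (D i)) hKreal) (by positivity)
  have hblockB : ∀ i, ‖∑ x ∈ LB i, f x‖ ≤ A1^((1:ℝ)/2) * A2^((1:ℝ)/4)
      * (2 * C * r^i * ((p:ℝ)^((1:ℝ)/4) * (N:ℝ)^((3:ℝ)/8) * (T:ℝ)^((5:ℝ)/8))) := by
    intro i
    have hD1i := hD1 i
    set c := T - min T (D i + 1) with hc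
    set K := max 1 (H - c) with hK2
    have hsub : LB i ⊆ Icc (c+1) (c+K) := by
      intro x hx
      simp only [hLB, Finset.mem_filter, Finset.mem_Icc] at hx
      obtain ⟨⟨hx1, hx2⟩, hxa, hxi⟩ := hx
      have h2 := hF2 x hx1 hx2
      rw [hxi] at h2
      rw [Finset.mem_Icc]
      omega
    have hK1 : 1 ≤ K := by omega
    have hKT : K ≤ T := by omega
    have hKD : K ≤ D i := by omega
    have hKreal : ((K : ℕ):ℝ) ≤ (2:ℝ)^(i+1) * T / N :=
      le_trans (Nat.cast_le.mpr hKD) (hDreal i)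
    have hφB : ∀ x ∈ LB i, ‖φ x‖ ≤ (N:ℝ)/2^i := by
      intro x hx
      simp only [hLB, Finset.mem_filter, Finset.mem_Icc] at hx
      obtain ⟨⟨hx1, hx2⟩, _, hxi⟩ := hx
      have := hF1 x hx1 hx2
      rw [hxi] at this
      exact this
    have hb := block (LB i) c K ((N:ℝ)/2^i) (by positivity) hsub hK1 hKT hφB
    simp only [hf]
    refine le_trans hb ?_
    exact mul_le_mul_of_nonneg_left (blocknum i K hKreal) (by positivity)
  -- assemble
  have hnorm1 : ‖∑ x ∈ Icc 1 H, f x‖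
      ≤ ∑ i ∈ range (N+1), (‖∑ x ∈ LA i, f x‖ + ‖∑ x ∈ LB i, f x‖) := by
    rw [hsplit]
    refine le_trans (norm_sum_le _ _) (Finset.sum_le_sum fun i _ => norm_add_le _ _)
  have hper : ∀ i ∈ range (N+1),
      ‖∑ x ∈ LA i, f x‖ + ‖∑ x ∈ LB i, f x‖ ≤ 4 * C * G * r^i := by
    intro i _
    have h1 := hblockA i
    have h2 := hblockB i
    have e : A1^((1:ℝ)/2) * A2^((1:ℝ)/4)
        * (2 * C * r^i * ((p:ℝ)^((1:ℝ)/4) * (N:ℝ)^((3:ℝ)/8) * (T:ℝ)^((5:ℝ)/8)))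
        = 2 * C * G * r^i := by
      rw [hG]; ring
    rw [e] at h1 h2
    linarith
  have htotal : ‖∑ x ∈ Icc 1 H, f x‖ ≤ 20 * C * G := by
    refine le_trans hnorm1 (le_trans (Finset.sum_le_sum hper) ?_)
    have e : ∑ i ∈ range (N+1), 4 * C * G * r^i
        = 4 * C * G * ∑ i ∈ range (N+1), r^i := by
      rw [Finset.mul_sum]
    rw [e]
    have h5 : 4 * C * G * ∑ i ∈ range (N+1), r^i ≤ 4 * C * G * 5 :=
      mul_le_mul_of_nonneg_left (geo_bound N) (by positivity)
    refine le_trans h5 (le_of_eq (by ring))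
  have hCle : C ≤ 1 + |C| := le_trans (le_abs_self C) (by linarith [abs_nonneg C])
  calc ‖∑ x ∈ Icc 1 H, f x‖ ≤ 20 * C * G := htotal
    _ ≤ 20 * (1 + |C|) * G := by
        apply mul_le_mul_of_nonneg_right _ hGn
        linarith
    _ = 20 * (1 + |C|) * A1 ^ ((1:ℝ)/2) * A2 ^ ((1:ℝ)/4) * (p : ℝ) ^ ((1:ℝ)/4)
        * (N : ℝ) ^ ((3:ℝ)/8) * (T : ℝ) ^ ((5:ℝ)/8) := by
        rw [hG]; ring
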